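/- The operator D̄ preserves V_k: for every natural number k, every σ ∈ V_k, and every i ∈ {1,2,3}, the functions Lᵢσ and D̄σ again belong to V_k. -/

import Mathlib

/-!
Each coordinate of `L_v σ` is obtained from the corresponding coordinate polynomial `P` of `σ` by
the first-order operator `∑ₘ (A x)ₘ ∂ₘ`, where `A` is the matrix of right multiplication by `v`.
This operator preserves homogeneous degrees, and its commutator with the Laplacian is
`2 ∑ₘₙ Aₘₙ ∂ₙ∂ₘ`, which vanishes when `A` is antisymmetric, i.e. when `v` is imaginary. So
`L₁, L₂, L₃` preserve `V_k`, and `D̄σ = ∑ᵢ Lᵢσ · (-eᵢ)` lies in `V_k` because `V_k` is closed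
under sums and under right multiplication by a constant quaternion.
-/

open Quaternion MvPolynomial

noncomputable section

/-- The standard imaginary quaternion units. -/
def e1 : ℍ[ℝ] := ⟨0, 1, 0, 0⟩
def e2 : ℍ[ℝ] := ⟨0, 0, 1, 0⟩
def e3 : ℍ[ℝ] := ⟨0, 0, 0, 1⟩

/-- Infinitesimal right translation: `(L_v σ)(x) = Dσ(x)[x·v]`. -/
def Lop (v : ℍ[ℝ]) (σ : ℍ[ℝ] → ℍ[ℝ]) : ℍ[ℝ] → ℍ[ℝ] :=
  fun x => fderiv ℝ σ x (x * v)

/-- The operator `D̄σ = −((L₁σ)·e₁ + (L₂σ)·e₂ + (L₃σ)·e₃)`. -/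
def Dbar (σ : ℍ[ℝ] → ℍ[ℝ]) : ℍ[ℝ] → ℍ[ℝ] :=
  fun x => -(Lop e1 σ x * e1 + Lop e2 σ x * e2 + Lop e3 σ x * e3)

/-- The four real coordinates of a quaternion. -/
def coords (x : ℍ[ℝ]) : Fin 4 → ℝ := ![x.re, x.imI, x.imJ, x.imK]

/-- `σ ∈ V_k`: each of the four real components of `σ` is (given by) a harmonic
polynomial on `ℝ⁴`, homogeneous of degree `k`. -/
def memVk (k : ℕ) (σ : ℍ[ℝ] → ℍ[ℝ]) : Prop :=
  ∀ c : Fin 4, ∃ P : MvPolynomial (Fin 4) ℝ,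
    P.IsHomogeneous k ∧ (∑ i : Fin 4, pderiv i (pderiv i P)) = 0 ∧
    ∀ x : ℍ[ℝ], eval (coords x) P = coords (σ x) c

open Matrix

theorem Matrix.sum_sum_smul_add_swap_eq_zero {R ι M : Type*} [Ring R] [Fintype ι] [AddCommGroup M]
    [Module R M] {A : Matrix ι ι R} (hA : Aᵀ = -A) (T : ι → ι → M) :
    ∑ m, ∑ n, A m n • (T m n + T n m) = 0 := by
  have hswap : ∑ m, ∑ n, A m n • T n m = -∑ m, ∑ n, A m n • T m n := by
    rw [Finset.sum_comm]
    simp only [← Finset.sum_neg_distrib, ← neg_smul]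
    refine Finset.sum_congr rfl fun m _ => Finset.sum_congr rfl fun n _ => ?_
    rw [← Matrix.neg_apply, ← hA, Matrix.transpose_apply]
  simp only [smul_add, Finset.sum_add_distrib, hswap, add_neg_cancel]

namespace MvPolynomial

section Laplacian

variable {ι R : Type*} [CommRing R]

theorem pderiv_pderiv_comm (i j : ι) (P : MvPolynomial ι R) :
    pderiv i (pderiv j P) = pderiv j (pderiv i P) := by
  let D : ι → Derivation R (MvPolynomial ι R) (MvPolynomial ι R) := pderiv
  have hbracket : ⁅D i, D j⁆ = 0 := by
    refine derivation_ext fun k => ?_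
    classical
    rw [Derivation.commutator_apply]
    simp [D, pderiv_X, Pi.single_apply, apply_ite]
  rw [← sub_eq_zero, ← Derivation.commutator_apply, hbracket, Derivation.zero_apply]

variable [Fintype ι]

def laplacian : MvPolynomial ι R →ₗ[R] MvPolynomial ι R :=
  ∑ i, (pderiv i).toLinearMap ∘ₗ (pderiv i).toLinearMap

theorem laplacian_apply (P : MvPolynomial ι R) :
    laplacian P = ∑ i, pderiv i (pderiv i P) := by
  simp [laplacian]

theorem laplacian_pderiv (i : ι) (P : MvPolynomial ι R) :
    laplacian (pderiv i P) = pderiv i (laplacian P) := by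
  simp only [laplacian_apply, map_sum, pderiv_pderiv_comm i]

theorem laplacian_X_mul (n : ι) (P : MvPolynomial ι R) :
    laplacian (X n * P) = 2 • pderiv n P + X n * laplacian P := by
  classical
  simp only [laplacian_apply, Derivation.leibniz, smul_eq_mul, pderiv_X, Pi.single_apply, mul_ite,
    mul_one, mul_zero, map_add, Finset.sum_add_distrib, Finset.sum_ite_eq, Finset.mem_univ,
    if_true, apply_ite (pderiv _), map_zero, two_smul, Finset.mul_sum]
  abel

variable (ι R) in
def harmonicHomogeneousSubmodule (k : ℕ) : Submodule R (MvPolynomial ι R) :=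
  homogeneousSubmodule ι R k ⊓ LinearMap.ker laplacian

theorem mem_harmonicHomogeneousSubmodule {k : ℕ} {P : MvPolynomial ι R} :
    P ∈ harmonicHomogeneousSubmodule ι R k ↔ P.IsHomogeneous k ∧ laplacian P = 0 := by
  rw [harmonicHomogeneousSubmodule, Submodule.mem_inf, mem_homogeneousSubmodule, LinearMap.mem_ker]

def linearFieldDeriv (A : Matrix ι ι R) (P : MvPolynomial ι R) : MvPolynomial ι R :=
  ∑ m, ∑ n, A m n • (X n * pderiv m P)

theorem IsHomogeneous.linearFieldDeriv {P : MvPolynomial ι R} {k : ℕ} (hP : P.IsHomogeneous k)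
    (A : Matrix ι ι R) : (P.linearFieldDeriv A).IsHomogeneous k := by
  have hterm : ∀ m n, (X n * pderiv m P).IsHomogeneous k := by
    intro m n
    rcases k with _ | k
    · obtain ⟨a, rfl⟩ : ∃ a, P = C a :=
        ⟨_, totalDegree_eq_zero_iff_eq_C.1 ((totalDegree_zero_iff_isHomogeneous _).2 hP)⟩
      simpa only [pderiv_C, mul_zero] using isHomogeneous_zero _ _ _
    · simpa only [add_tsub_cancel_right, add_comm 1] using (isHomogeneous_X R n).mul hP.pderiv
  simp only [MvPolynomial.linearFieldDeriv, ← mem_homogeneousSubmodule] at hterm ⊢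
  exact Submodule.sum_mem _ fun m _ => Submodule.sum_mem _ fun n _ =>
    Submodule.smul_mem _ _ (hterm m n)

theorem laplacian_linearFieldDeriv {A : Matrix ι ι R} (hA : Aᵀ = -A) (P : MvPolynomial ι R) :
    laplacian (P.linearFieldDeriv A) = (laplacian P).linearFieldDeriv A := by
  have hsecond : ∑ m, ∑ n, A m n • (2 • pderiv n (pderiv m P)) = 0 := by
    simpa only [two_smul, pderiv_pderiv_comm _ _ P] using
      sum_sum_smul_add_swap_eq_zero hA fun m n => pderiv n (pderiv m P)
  simp only [MvPolynomial.linearFieldDeriv, map_sum, map_smul, laplacian_X_mul, laplacian_pderiv,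
    smul_add, Finset.sum_add_distrib, hsecond, zero_add]

theorem linearFieldDeriv_mem_harmonicHomogeneousSubmodule {A : Matrix ι ι R} (hA : Aᵀ = -A)
    {k : ℕ} {P : MvPolynomial ι R} (hP : P ∈ harmonicHomogeneousSubmodule ι R k) :
    P.linearFieldDeriv A ∈ harmonicHomogeneousSubmodule ι R k := by
  rw [mem_harmonicHomogeneousSubmodule] at hP ⊢
  refine ⟨hP.1.linearFieldDeriv A, ?_⟩
  rw [laplacian_linearFieldDeriv hA, hP.2]
  simp [MvPolynomial.linearFieldDeriv]

theorem eval_linearFieldDeriv (A : Matrix ι ι R) (P : MvPolynomial ι R) (y : ι → R) :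
    eval y (P.linearFieldDeriv A) = ∑ m, (A *ᵥ y) m * eval y (pderiv m P) := by
  simp [MvPolynomial.linearFieldDeriv, Matrix.mulVec, dotProduct, Finset.sum_mul, mul_assoc]

end Laplacian

section Calculus

variable {𝕜 ι : Type*} [NontriviallyNormedField 𝕜] [Fintype ι]

theorem hasFDerivAt_eval (P : MvPolynomial ι 𝕜) (y : ι → 𝕜) :
    HasFDerivAt (fun z => eval z P)
      (∑ i, eval y (pderiv i P) • (ContinuousLinearMap.proj i : (ι → 𝕜) →L[𝕜] 𝕜)) y := by
  classical
  induction P using MvPolynomial.induction_on with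
  | C a =>
    simp only [eval_C]
    refine (hasFDerivAt_const a y).congr_fderiv ?_
    ext v
    simp
  | add p q hp hq =>
    simp only [map_add]
    refine (hp.add hq).congr_fderiv ?_
    ext v
    simp [add_mul, Finset.sum_add_distrib]
  | mul_X p n hp =>
    simp only [eval_mul, eval_X]
    refine (hp.mul (hasFDerivAt_apply n y)).congr_fderiv ?_
    ext v
    simp [pderiv_X, Pi.single_apply, apply_ite (eval y), mul_add, Finset.sum_add_distrib,
      Finset.mul_sum, mul_comm, mul_left_comm]

end Calculus

end MvPolynomial

def rightMulMatrix (v : ℍ[ℝ]) : Matrix (Fin 4) (Fin 4) ℝ :=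
  !![v.re, -v.imI, -v.imJ, -v.imK;
     v.imI, v.re, v.imK, -v.imJ;
     v.imJ, -v.imK, v.re, v.imI;
     v.imK, v.imJ, -v.imI, v.re]

theorem coords_mul (x v : ℍ[ℝ]) : coords (x * v) = rightMulMatrix v *ᵥ coords x := by
  ext m
  fin_cases m <;> simp [coords, rightMulMatrix, mulVec, dotProduct, Fin.sum_univ_four] <;> ring

theorem rightMulMatrix_transpose {v : ℍ[ℝ]} (hv : v.re = 0) :
    (rightMulMatrix v)ᵀ = -rightMulMatrix v := by
  ext m n
  fin_cases m <;> fin_cases n <;> simp [rightMulMatrix, hv]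

def coordsEquiv : ℍ[ℝ] ≃L[ℝ] (Fin 4 → ℝ) :=
  LinearEquiv.toContinuousLinearEquiv (QuaternionAlgebra.linearEquivTuple (-1 : ℝ) 0 (-1))

theorem coe_coordsEquiv : ⇑coordsEquiv = coords := by
  ext x c
  fin_cases c <;> rfl

theorem coords_add (x y : ℍ[ℝ]) : coords (x + y) = coords x + coords y := by
  rw [← coe_coordsEquiv, map_add]

theorem coords_fderiv_apply {σ : ℍ[ℝ] → ℍ[ℝ]} {P : Fin 4 → MvPolynomial (Fin 4) ℝ}
    (hP : ∀ c x, eval (coords x) (P c) = coords (σ x) c) (x w : ℍ[ℝ]) (c : Fin 4) :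
    coords (fderiv ℝ σ x w) c = ∑ m, coords w m * eval (coords x) (pderiv m (P c)) := by
  have hcomp : coordsEquiv ∘ σ = fun z c => eval (coordsEquiv z) (P c) := by
    funext z c
    simp [coe_coordsEquiv, hP]
  have hderiv : HasFDerivAt (coordsEquiv ∘ σ) (ContinuousLinearMap.pi fun c =>
      (∑ m, eval (coordsEquiv x) (pderiv m (P c)) •
        (ContinuousLinearMap.proj m : (Fin 4 → ℝ) →L[ℝ] ℝ)) ∘L
        (coordsEquiv : ℍ[ℝ] →L[ℝ] (Fin 4 → ℝ))) x := by
    rw [hcomp]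
    exact hasFDerivAt_pi.2 fun c => (hasFDerivAt_eval (P c) _).comp x coordsEquiv.hasFDerivAt
  have h := congr($(coordsEquiv.comp_fderiv (f := σ) (x := x)) w c)
  rw [hderiv.fderiv] at h
  simpa [coe_coordsEquiv, mul_comm] using h.symm

theorem memVk_iff {k : ℕ} {σ : ℍ[ℝ] → ℍ[ℝ]} :
    memVk k σ ↔ ∀ c, ∃ P ∈ harmonicHomogeneousSubmodule (Fin 4) ℝ k,
      ∀ x, eval (coords x) P = coords (σ x) c := by
  simp only [memVk, mem_harmonicHomogeneousSubmodule, laplacian_apply, and_assoc]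

theorem memVk_add {k : ℕ} {σ τ : ℍ[ℝ] → ℍ[ℝ]} (hσ : memVk k σ) (hτ : memVk k τ) :
    memVk k (fun x => σ x + τ x) := by
  rw [memVk_iff] at hσ hτ ⊢
  choose P hP hσP using hσ
  choose Q hQ hτQ using hτ
  exact fun c => ⟨P c + Q c, add_mem (hP c) (hQ c), fun x => by simp [coords_add, hσP, hτQ]⟩

theorem memVk_mul_const {k : ℕ} {σ : ℍ[ℝ] → ℍ[ℝ]} (hσ : memVk k σ) (q : ℍ[ℝ]) :
    memVk k (fun x => σ x * q) := by
  rw [memVk_iff] at hσ ⊢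
  choose P hP hσP using hσ
  refine fun c => ⟨∑ n, rightMulMatrix q c n • P n,
    Submodule.sum_mem _ fun n _ => Submodule.smul_mem _ _ (hP n), fun x => ?_⟩
  simp [coords_mul, hσP, mulVec, dotProduct]

theorem memVk_Lop {k : ℕ} {σ : ℍ[ℝ] → ℍ[ℝ]} (hσ : memVk k σ) {v : ℍ[ℝ]} (hv : v.re = 0) :
    memVk k (Lop v σ) := by
  rw [memVk_iff] at hσ ⊢
  choose P hP hσP using hσ
  refine fun c => ⟨(P c).linearFieldDeriv (rightMulMatrix v),
    linearFieldDeriv_mem_harmonicHomogeneousSubmodule (rightMulMatrix_transpose hv) (hP c),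
    fun x => ?_⟩
  rw [eval_linearFieldDeriv, Lop, coords_fderiv_apply hσP, coords_mul]

theorem Dbar_eq (σ : ℍ[ℝ] → ℍ[ℝ]) :
    Dbar σ = fun x => Lop e1 σ x * -e1 + Lop e2 σ x * -e2 + Lop e3 σ x * -e3 := by
  funext x
  simp only [Dbar, mul_neg, neg_add]

theorem Dbar_preserves_Vk (k : ℕ) (σ : ℍ[ℝ] → ℍ[ℝ]) (hσ : memVk k σ) :
    (∀ v ∈ ({e1, e2, e3} : Set ℍ[ℝ]), memVk k (Lop v σ)) ∧ memVk k (Dbar σ) := by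
  have h1 : memVk k (Lop e1 σ) := memVk_Lop hσ rfl
  have h2 : memVk k (Lop e2 σ) := memVk_Lop hσ rfl
  have h3 : memVk k (Lop e3 σ) := memVk_Lop hσ rfl
  refine ⟨by rintro v (rfl | rfl | rfl) <;> assumption, ?_⟩
  rw [Dbar_eq]
  exact memVk_add (memVk_add (memVk_mul_const h1 _) (memVk_mul_const h2 _)) (memVk_mul_const h3 _)

end
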